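/- arXiv:2510.02896 — 2 statements merged into one kernel-verified Lean document; each statement's English description precedes it below -/
import Mathlib

section
/- For a symmetric positive definite matrix M ∈ ℝ^{k×k}, vector b ∈ ℝ^k, and τ > 0, the probability density p* of the multivariate Gaussian distribution with mean -½M⁻¹b and covariance (τ/2)M⁻¹ minimizes the functional p ↦ E_{u∼p}[uᵀMu + bᵀu + τ log p(u)] over all probability densities p on ℝ^k. -/
open Matrix MeasureTheory

/-- Density of the multivariate Gaussian `N(μ, S)` on `ℝ^k`. -/
noncomputable def gaussianDensity {k : ℕ} (μ : Fin k → ℝ)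
    (S : Matrix (Fin k) (Fin k) ℝ) : (Fin k → ℝ) → ℝ := fun u =>
  (2 * Real.pi) ^ (-(k : ℝ) / 2) * S.det ^ (-(1 : ℝ) / 2) *
    Real.exp (-(1 / 2) * ((u - μ) ⬝ᵥ S⁻¹.mulVec (u - μ)))

/-- The entropy-regularized objective `p ↦ E_{u∼p}[uᵀMu + bᵀu + τ log p(u)]`. -/
noncomputable def regObjective {k : ℕ} (M : Matrix (Fin k) (Fin k) ℝ)
    (b : Fin k → ℝ) (τ : ℝ) (p : (Fin k → ℝ) → ℝ) : ℝ :=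
  ∫ u : Fin k → ℝ, p u * ((u ⬝ᵥ M.mulVec u) + (b ⬝ᵥ u) + τ * Real.log (p u))

lemma posDef_smul' {k : ℕ} {Q : Matrix (Fin k) (Fin k) ℝ} (hQ : Q.PosDef) {c : ℝ}
    (hc : 0 < c) : (c • Q).PosDef := by
  rw [Matrix.posDef_iff_dotProduct_mulVec]
  constructor
  · show (c • Q)ᴴ = c • Q
    rw [Matrix.conjTranspose_smul, hQ.1.eq, star_trivial]
  intro x hx
  rw [smul_mulVec, dotProduct_smul]
  exact mul_pos hc (hQ.dotProduct_mulVec_pos hx)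

lemma psd_det_nonneg {k : ℕ} {A : Matrix (Fin k) (Fin k) ℝ} (hA : A.PosSemidef) :
    0 ≤ A.det := by
  rw [hA.isHermitian.det_eq_prod_eigenvalues]
  exact Finset.prod_nonneg fun i _ => hA.eigenvalues_nonneg i

lemma symm_dot {k : ℕ} {A : Matrix (Fin k) (Fin k) ℝ} (hA : Aᵀ = A) (x y : Fin k → ℝ) :
    x ⬝ᵥ A.mulVec y = y ⬝ᵥ A.mulVec x := by
  rw [dotProduct_mulVec, ← Matrix.mulVec_transpose, hA, dotProduct_comm]

lemma exp_dot_self_eq {k : ℕ} (y : Fin k → ℝ) :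
    Real.exp (-(y ⬝ᵥ y)) = ∏ i, Real.exp (-(1 : ℝ) * (y i) ^ 2) := by
  rw [← Real.exp_sum]
  congr 1
  rw [dotProduct, ← Finset.sum_neg_distrib]
  exact Finset.sum_congr rfl fun i _ => by ring

lemma integrable_std_gauss {k : ℕ} :
    Integrable (fun y : Fin k → ℝ => Real.exp (-(y ⬝ᵥ y))) := by
  simp_rw [exp_dot_self_eq]
  exact MeasureTheory.Integrable.fintype_prod (f := fun _ : Fin k => fun x : ℝ =>
    Real.exp (-(1 : ℝ) * x ^ 2)) (fun i => integrable_exp_neg_mul_sq one_pos)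

lemma integral_std_gauss {k : ℕ} :
    ∫ y : Fin k → ℝ, Real.exp (-(y ⬝ᵥ y)) = Real.pi ^ ((k : ℝ) / 2) := by
  simp_rw [exp_dot_self_eq]
  rw [MeasureTheory.volume_pi, MeasureTheory.integral_fintype_prod_eq_pow
    (fun x : ℝ => Real.exp (-(1 : ℝ) * x ^ 2)), integral_gaussian, Fintype.card_fin]
  rw [show Real.pi / 1 = Real.pi by ring, Real.sqrt_eq_rpow, ← Real.rpow_natCast
    (Real.pi ^ ((1 : ℝ) / 2)) k, ← Real.rpow_mul Real.pi_pos.le]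
  congr 1
  ring

open scoped MatrixOrder in
lemma gauss_cov {k : ℕ} {Q : Matrix (Fin k) (Fin k) ℝ} (hQ : Q.PosDef) :
    Integrable (fun u : Fin k → ℝ => Real.exp (-(u ⬝ᵥ Q.mulVec u))) ∧
      ∫ u : Fin k → ℝ, Real.exp (-(u ⬝ᵥ Q.mulVec u))
        = Real.pi ^ ((k : ℝ) / 2) * Q.det ^ (-(1 : ℝ) / 2) := by
  classical
  set C := CFC.sqrt Q with hCdef
  have hCC : C * C = Q := CFC.sqrt_mul_sqrt_self Q hQ.posSemidef.nonneg
  have hCH : Cᵀ = C := (CFC.sqrt_nonneg Q).posSemidef.isHermitian.eq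
  have hkey : ∀ u, u ⬝ᵥ Q.mulVec u = (C.mulVec u) ⬝ᵥ (C.mulVec u) := by
    intro u
    rw [← hCC, ← Matrix.mulVec_mulVec, Matrix.dotProduct_mulVec u C, ← Matrix.mulVec_transpose,
      hCH]
  have hdetC0 : 0 ≤ C.det := psd_det_nonneg (CFC.sqrt_nonneg Q).posSemidef
  have hdetCC : C.det * C.det = Q.det := by rw [← Matrix.det_mul, hCC]
  have hdetQ : 0 < Q.det := hQ.det_pos
  have hdetC : 0 < C.det := by nlinarith
  have hmap : Measure.map (Matrix.toLin' C) volume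
      = ENNReal.ofReal |C.det⁻¹| • volume :=
    Real.map_matrix_volume_pi_eq_smul_volume_pi hdetC.ne'
  set g : (Fin k → ℝ) → ℝ := fun y => Real.exp (-(y ⬝ᵥ y)) with hgdef
  have hg_cont : Continuous g := by
    apply Real.continuous_exp.comp
    apply Continuous.neg
    unfold dotProduct
    exact continuous_finset_sum _ fun i _ => ((continuous_apply i).mul (continuous_apply i))
  have hT_cont : Continuous (Matrix.toLin' C) := LinearMap.continuous_on_pi _
  have hcomp : (fun u : Fin k → ℝ => Real.exp (-(u ⬝ᵥ Q.mulVec u)))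
      = g ∘ (Matrix.toLin' C) := by
    funext u
    simp [hgdef, hkey u, Matrix.toLin'_apply]
  have hg_int : Integrable g := integrable_std_gauss
  have hg_map : Integrable g (Measure.map (Matrix.toLin' C) volume) := by
    rw [hmap]
    exact hg_int.smul_measure ENNReal.ofReal_ne_top
  constructor
  · rw [hcomp]
    exact (integrable_map_measure hg_cont.aestronglyMeasurable
      hT_cont.aemeasurable).mp hg_map
  · have h1 : ∫ u, Real.exp (-(u ⬝ᵥ Q.mulVec u)) = ∫ y, g y ∂(Measure.map (Matrix.toLin' C) volume) := by
      rw [hcomp, integral_map hT_cont.aemeasurable hg_cont.aestronglyMeasurable]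
      rfl
    rw [h1, hmap, integral_smul_measure, ENNReal.toReal_ofReal (abs_nonneg _),
      abs_of_pos (inv_pos.mpr hdetC),
      integral_std_gauss]
    have hsq : Real.sqrt Q.det = C.det := by
      rw [← hdetCC, Real.sqrt_mul_self hdetC0]
    have hrq : Q.det ^ (-(1 : ℝ) / 2) = (Real.sqrt Q.det)⁻¹ := by
      rw [Real.sqrt_eq_rpow, neg_div, ← Real.rpow_neg hdetQ.le]
    rw [hrq, hsq, smul_eq_mul]
    ring

/-- The Gaussian with mean `-½M⁻¹b` and covariance `(τ/2)M⁻¹` minimizes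
`p ↦ E_{u∼p}[uᵀMu + bᵀu + τ log p(u)]` over all probability densities on `ℝ^k`. -/
theorem stmt_0 (k : ℕ) (M : Matrix (Fin k) (Fin k) ℝ) (hM : M.PosDef)
    (hMs : M.IsSymm) (b : Fin k → ℝ) (τ : ℝ) (hτ : 0 < τ) :
    ∀ p : (Fin k → ℝ) → ℝ, Measurable p → (∀ u, 0 ≤ p u) →
      (∫ u : Fin k → ℝ, p u) = 1 →
      Integrable (fun u : Fin k → ℝ =>
        p u * ((u ⬝ᵥ M.mulVec u) + (b ⬝ᵥ u) + τ * Real.log (p u))) →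
      regObjective M b τ (gaussianDensity (-(1 / 2 : ℝ) • M⁻¹.mulVec b) ((τ / 2) • M⁻¹))
        ≤ regObjective M b τ p := by
  intro p hpmeas hp0 hp1 hpint
  classical
  have hdetM : 0 < M.det := hM.det_pos
  have hMdet_unit : IsUnit M.det := isUnit_iff_ne_zero.mpr hdetM.ne'
  have hMinv : M⁻¹.PosDef := hM.inv
  have hMinv_unit : IsUnit M⁻¹.det := isUnit_iff_ne_zero.mpr hMinv.det_pos.ne'
  have hMsymm : Mᵀ = M := hMs
  have hMinvsymm : M⁻¹ᵀ = M⁻¹ := by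
    rw [Matrix.transpose_nonsing_inv, hMsymm]
  set μ : Fin k → ℝ := -(1 / 2 : ℝ) • M⁻¹.mulVec b with hμdef
  set S : Matrix (Fin k) (Fin k) ℝ := (τ / 2) • M⁻¹ with hSdef
  set Q : Matrix (Fin k) (Fin k) ℝ := τ⁻¹ • M with hQdef
  have hQ : Q.PosDef := posDef_smul' hM (inv_pos.mpr hτ)
  have hS_pd : S.PosDef := posDef_smul' hMinv (by positivity)
  have hdetS : 0 < S.det := hS_pd.det_pos
  have hdetQ : 0 < Q.det := hQ.det_pos
  -- inverse of S
  have hSinv : S⁻¹ = (2 / τ) • M := by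
    apply Matrix.inv_eq_right_inv
    rw [hSdef, Matrix.smul_mul, Matrix.mul_smul, smul_smul,
      Matrix.nonsing_inv_mul _ hMdet_unit,
      show (τ / 2) * (2 / τ) = (1 : ℝ) by field_simp, one_smul]
  -- quadratic expansion
  set c : ℝ := (1 / 4 : ℝ) * (b ⬝ᵥ M⁻¹.mulVec b) with hcdef
  have hMμ : M.mulVec μ = -(1 / 2 : ℝ) • b := by
    rw [hμdef, Matrix.mulVec_smul, Matrix.mulVec_mulVec, Matrix.mul_nonsing_inv _ hMdet_unit,
      Matrix.one_mulVec]
  have hquad : ∀ u : Fin k → ℝ, (u - μ) ⬝ᵥ M.mulVec (u - μ)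
      = (u ⬝ᵥ M.mulVec u) + (b ⬝ᵥ u) + c := by
    intro u
    have hsymm_dot := symm_dot hMsymm
    rw [Matrix.mulVec_sub, sub_dotProduct, dotProduct_sub, dotProduct_sub]
    rw [hsymm_dot μ u, hMμ]
    have h1 : u ⬝ᵥ (-(1 / 2 : ℝ) • b) = -(1 / 2 : ℝ) * (u ⬝ᵥ b) := by
      rw [dotProduct_smul]; rfl
    have h2 : μ ⬝ᵥ (-(1 / 2 : ℝ) • b) = -(1 / 2 : ℝ) * (μ ⬝ᵥ b) := by
      rw [dotProduct_smul]; rfl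
    have h3 : μ ⬝ᵥ b = -(1 / 2 : ℝ) * (b ⬝ᵥ M⁻¹.mulVec b) := by
      rw [hμdef, smul_dotProduct, dotProduct_comm]; rfl
    rw [h1, h2, h3, dotProduct_comm u b, hcdef]
    ring
  have hquadQ : ∀ u : Fin k → ℝ, (u - μ) ⬝ᵥ Q.mulVec (u - μ)
      = τ⁻¹ * ((u ⬝ᵥ M.mulVec u) + (b ⬝ᵥ u) + c) := by
    intro u
    rw [hQdef, smul_mulVec, dotProduct_smul, smul_eq_mul, hquad]
  -- the Gaussian factor
  set g : (Fin k → ℝ) → ℝ := fun u => Real.exp (-((u - μ) ⬝ᵥ Q.mulVec (u - μ))) with hgdef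
  have hgpos : ∀ u, 0 < g u := fun u => Real.exp_pos _
  obtain ⟨hQint, hQintegral⟩ := gauss_cov hQ
  have hg_int : Integrable g := hQint.comp_sub_right μ
  set Z : ℝ := Real.pi ^ ((k : ℝ) / 2) * Q.det ^ (-(1 : ℝ) / 2) with hZdef
  have hg_integral : ∫ u, g u = Z := by
    rw [hgdef]
    rw [integral_sub_right_eq_self (fun u : Fin k → ℝ => Real.exp (-(u ⬝ᵥ Q.mulVec u))) μ]
    exact hQintegral
  set K : ℝ := (2 * Real.pi) ^ (-(k : ℝ) / 2) * S.det ^ (-(1 : ℝ) / 2) with hKdef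
  have hKpos : 0 < K := by
    apply mul_pos
    · exact Real.rpow_pos_of_pos (by positivity) _
    · exact Real.rpow_pos_of_pos hdetS _
  -- gaussianDensity = K * g
  have hpstar : ∀ u, gaussianDensity μ S u = K * g u := by
    intro u
    rw [gaussianDensity, hKdef, hgdef]
    congr 1
    rw [hSinv]
    congr 1
    rw [hQdef, smul_mulVec, dotProduct_smul, smul_mulVec, dotProduct_smul,
      smul_eq_mul, smul_eq_mul]
    field_simp
  -- normalization : K * Z = 1
  have hdetSQ : S.det * Q.det = (2 : ℝ)⁻¹ ^ k := by
    rw [hSdef, hQdef, Matrix.det_smul, Matrix.det_smul, Fintype.card_fin]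
    have hMM' : M⁻¹.det * M.det = 1 := by
      have := Matrix.det_mul M⁻¹ M
      rw [Matrix.nonsing_inv_mul _ hMdet_unit, Matrix.det_one] at this
      linarith [this]
    have : (τ / 2) ^ k * M⁻¹.det * (τ⁻¹ ^ k * M.det)
        = (τ / 2 * τ⁻¹) ^ k * (M⁻¹.det * M.det) := by ring
    rw [this, hMM', mul_one]
    congr 1
    field_simp
  have hKZ : K * Z = 1 := by
    rw [hKdef, hZdef]
    have h2pi : (2 * Real.pi) ^ (-(k : ℝ) / 2)
        = (2 : ℝ) ^ (-(k : ℝ) / 2) * Real.pi ^ (-(k : ℝ) / 2) :=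
      Real.mul_rpow (by norm_num) Real.pi_pos.le
    have hSQ : S.det ^ (-(1 : ℝ) / 2) * Q.det ^ (-(1 : ℝ) / 2)
        = (2 : ℝ) ^ ((k : ℝ) / 2) := by
      rw [← Real.mul_rpow hdetS.le hdetQ.le, hdetSQ, inv_pow,
        ← Real.rpow_natCast (2 : ℝ) k, ← Real.rpow_neg (by norm_num : (0:ℝ) ≤ 2),
        ← Real.rpow_mul (by norm_num : (0:ℝ) ≤ 2)]
      congr 1
      ring
    have hpi : Real.pi ^ (-(k : ℝ) / 2) * Real.pi ^ ((k : ℝ) / 2) = 1 := by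
      rw [← Real.rpow_add Real.pi_pos, show -(k:ℝ)/2 + (k:ℝ)/2 = 0 by ring,
        Real.rpow_zero]
    have h2 : (2 : ℝ) ^ (-(k : ℝ) / 2) * (2 : ℝ) ^ ((k : ℝ) / 2) = 1 := by
      rw [← Real.rpow_add (by norm_num : (0:ℝ) < 2), show -(k:ℝ)/2 + (k:ℝ)/2 = 0 by ring,
        Real.rpow_zero]
    calc (2 * Real.pi) ^ (-(k : ℝ) / 2) * S.det ^ (-(1:ℝ)/2)
          * (Real.pi ^ ((k : ℝ) / 2) * Q.det ^ (-(1:ℝ)/2))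
        = ((2:ℝ) ^ (-(k : ℝ) / 2) * Real.pi ^ (-(k : ℝ) / 2)) * Real.pi ^ ((k : ℝ) / 2)
          * (S.det ^ (-(1:ℝ)/2) * Q.det ^ (-(1:ℝ)/2)) := by rw [h2pi]; ring
      _ = (2:ℝ) ^ (-(k : ℝ) / 2) * (Real.pi ^ (-(k : ℝ) / 2) * Real.pi ^ ((k : ℝ) / 2))
          * (2 : ℝ) ^ ((k : ℝ) / 2) := by rw [hSQ]; ring
      _ = 1 := by rw [hpi, mul_one, h2]
  -- value at the Gaussian
  have hlogKg : ∀ u, Real.log (K * g u)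
      = Real.log K - τ⁻¹ * ((u ⬝ᵥ M.mulVec u) + (b ⬝ᵥ u) + c) := by
    intro u
    rw [Real.log_mul hKpos.ne' (hgpos u).ne', hgdef, Real.log_exp, hquadQ u]
    ring
  have hobj_star : regObjective M b τ (gaussianDensity μ S) = τ * Real.log K - c := by
    rw [regObjective]
    have hptw : ∀ u : Fin k → ℝ, gaussianDensity μ S u
        * ((u ⬝ᵥ M.mulVec u) + (b ⬝ᵥ u) + τ * Real.log (gaussianDensity μ S u))
        = (τ * Real.log K - c) * (K * g u) := by
      intro u
      rw [hpstar u, hlogKg u]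
      field_simp
      ring
    simp_rw [hptw]
    rw [integral_const_mul, integral_const_mul, hg_integral]
    rw [show K * Z = 1 from hKZ]  -- careful: expression is (τ log K - c) * (K * Z)
    ring
  rw [hobj_star]
  -- general p
  have hp_int : Integrable p := by
    by_contra h
    rw [integral_undef h] at hp1
    exact zero_ne_one hp1
  have hL_int : Integrable (fun u : Fin k → ℝ =>
      τ * (p u - K * g u) + (τ * Real.log K - c) * p u) :=
    ((hp_int.sub (hg_int.const_mul K)).const_mul τ).add (hp_int.const_mul _)
  have hpt : ∀ u, τ * (p u - K * g u) + (τ * Real.log K - c) * p u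
      ≤ p u * ((u ⬝ᵥ M.mulVec u) + (b ⬝ᵥ u) + τ * Real.log (p u)) := by
    intro u
    rcases eq_or_lt_of_le (hp0 u) with h0 | hpos
    · rw [← h0]
      have hpos' : 0 < τ * (K * g u) := mul_pos hτ (mul_pos hKpos (hgpos u))
      nlinarith [hpos']
    · have hKg : 0 < K * g u := mul_pos hKpos (hgpos u)
      have h1 : Real.log (K * g u) - Real.log (p u) ≤ K * g u / p u - 1 := by
        have := Real.log_le_sub_one_of_pos (div_pos hKg hpos)
        rwa [Real.log_div hKg.ne' hpos.ne'] at this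
      have h3 := mul_le_mul_of_nonneg_left h1 (mul_pos hτ hpos).le
      have h4' : τ * (p u * (K * g u / p u)) = τ * (K * g u) := by
        congr 1
        field_simp
      have h5 : τ * (p u * Real.log (K * g u)) = τ * (p u * Real.log K)
          - p u * ((u ⬝ᵥ M.mulVec u) + (b ⬝ᵥ u) + c) := by
        rw [hlogKg u]
        field_simp
      nlinarith [h3, h4', h5]
  have hmono := integral_mono hL_int hpint hpt
  have hLint_val : ∫ u : Fin k → ℝ,
      (τ * (p u - K * g u) + (τ * Real.log K - c) * p u) = τ * Real.log K - c := by
    have e1 : Integrable (fun u : Fin k → ℝ => τ * (p u - K * g u)) :=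
      (hp_int.sub (hg_int.const_mul K)).const_mul τ
    have e2 : Integrable (fun u : Fin k → ℝ => (τ * Real.log K - c) * p u) :=
      hp_int.const_mul _
    have e3 : Integrable (fun u : Fin k → ℝ => K * g u) := hg_int.const_mul K
    have e4 : Integrable (fun u : Fin k → ℝ => p u - K * g u) := hp_int.sub e3
    rw [integral_add e1 e2]
    rw [integral_const_mul, integral_const_mul, integral_sub hp_int e3,
      integral_const_mul, hp1, hg_integral, hKZ]
    ring
  rw [regObjective]
  calc τ * Real.log K - c = ∫ u : Fin k → ℝ,
        (τ * (p u - K * g u) + (τ * Real.log K - c) * p u) := hLint_val.symm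
    _ ≤ _ := hmono
end

section
/- Let η > 0, τ > 0, γ ∈ (0,1), and let R, G be symmetric positive semidefinite n×n matrices with R positive definite. Let Σ be symmetric positive definite with aI ⪯ Σ ⪯ I, where 0 < a < min{τ/(2‖R + G‖), σ_min(Σ)} and η ≤ 2(1−γ)a²/τ and τ ≤ 2σ_min(R). Then the matrix Σ' := Σ − (η/(1−γ))·Σ((R + G) − (τ/2)Σ⁻¹)Σ is symmetric and satisfies aI ⪯ Σ' ⪯ I. -/
open Matrix
open scoped Matrix.Norms.L2Operator

lemma conj_poly {n : ℕ} (V : Matrix (Fin n) (Fin n) ℝ) (e : Fin n → ℝ)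
    (hVV : V * Vᴴ = 1) (hVV' : Vᴴ * V = 1) (α β δ : ℝ) :
    α • (1 : Matrix (Fin n) (Fin n) ℝ) + β • (V * Matrix.diagonal e * Vᴴ)
      + δ • ((V * Matrix.diagonal e * Vᴴ) * (V * Matrix.diagonal e * Vᴴ))
    = V * Matrix.diagonal (fun i => α + β * e i + δ * (e i) ^ 2) * Vᴴ := by
  have hSS : (V * Matrix.diagonal e * Vᴴ) * (V * Matrix.diagonal e * Vᴴ)
      = V * (Matrix.diagonal e * Matrix.diagonal e) * Vᴴ := by
    have h1 : (V * Matrix.diagonal e * Vᴴ) * (V * Matrix.diagonal e * Vᴴ)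
        = V * (Matrix.diagonal e * (Vᴴ * V) * Matrix.diagonal e) * Vᴴ := by
      noncomm_ring
    rw [h1, hVV', Matrix.mul_one]
  have hD : Matrix.diagonal (fun i => α + β * e i + δ * (e i) ^ 2)
      = α • (1 : Matrix (Fin n) (Fin n) ℝ) + β • Matrix.diagonal e
        + δ • (Matrix.diagonal e * Matrix.diagonal e) := by
    rw [Matrix.diagonal_mul_diagonal, ← Matrix.diagonal_one]
    ext i j
    by_cases hij : i = j
    · subst hij
      simp only [Matrix.diagonal_apply_eq, Matrix.add_apply, Matrix.smul_apply,
        smul_eq_mul]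
      ring
    · simp [Matrix.diagonal_apply_ne _ hij, hij]
  rw [hSS, hD, Matrix.mul_add, Matrix.add_mul, Matrix.mul_add, Matrix.add_mul,
    Matrix.mul_smul, Matrix.smul_mul, Matrix.mul_smul, Matrix.smul_mul,
    Matrix.mul_smul, Matrix.smul_mul, Matrix.mul_one, hVV]

lemma poly_psd {n : ℕ} {S : Matrix (Fin n) (Fin n) ℝ} (hS : S.IsHermitian)
    (α β δ : ℝ)
    (h : ∀ i, 0 ≤ α + β * hS.eigenvalues i + δ * (hS.eigenvalues i) ^ 2) :
    (α • (1 : Matrix (Fin n) (Fin n) ℝ) + β • S + δ • (S * S)).PosSemidef := by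
  set V : Matrix (Fin n) (Fin n) ℝ := (hS.eigenvectorUnitary : Matrix (Fin n) (Fin n) ℝ) with hV
  have hVV : V * Vᴴ = 1 := by
    simpa [Matrix.star_eq_conjTranspose] using
      (Matrix.mem_unitaryGroup_iff).mp hS.eigenvectorUnitary.2
  have hVV' : Vᴴ * V = 1 := by
    simpa [Matrix.star_eq_conjTranspose] using
      (Matrix.mem_unitaryGroup_iff').mp hS.eigenvectorUnitary.2
  have hspec : S = V * Matrix.diagonal hS.eigenvalues * Vᴴ := by
    simpa [Matrix.star_eq_conjTranspose, Function.comp] using hS.spectral_theorem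
  have key : α • (1 : Matrix (Fin n) (Fin n) ℝ) + β • S + δ • (S * S)
      = V * Matrix.diagonal (fun i => α + β * hS.eigenvalues i + δ * (hS.eigenvalues i) ^ 2) * Vᴴ := by
    conv_lhs => rw [hspec]
    exact conj_poly V _ hVV hVV' α β δ
  rw [key]
  exact (Matrix.posSemidef_diagonal_iff.mpr h).mul_mul_conjTranspose_same V

lemma psd_smul {n : ℕ} {A : Matrix (Fin n) (Fin n) ℝ} (hA : A.PosSemidef) {c : ℝ}
    (hc : 0 ≤ c) : (c • A).PosSemidef := by
  refine Matrix.PosSemidef.of_dotProduct_mulVec_nonneg ?_ (fun x => ?_)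
  · show (c • A)ᴴ = c • A
    rw [Matrix.conjTranspose_smul, star_trivial, hA.1]
  · rw [Matrix.smul_mulVec, dotProduct_smul, smul_eq_mul]
    exact mul_nonneg hc (hA.dotProduct_mulVec_nonneg x)

lemma dot_self_basis {n : ℕ} {S : Matrix (Fin n) (Fin n) ℝ} (hS : S.IsHermitian) (i : Fin n) :
    dotProduct (star ⇑(hS.eigenvectorBasis i)) ⇑(hS.eigenvectorBasis i) = 1 := by
  have h1 : ‖hS.eigenvectorBasis i‖ = 1 := hS.eigenvectorBasis.orthonormal.1 i
  have h2 := EuclideanSpace.inner_eq_star_dotProduct (𝕜 := ℝ)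
    (hS.eigenvectorBasis i) (hS.eigenvectorBasis i)
  rw [real_inner_self_eq_norm_sq, h1] at h2
  simpa using h2.symm

lemma eig_lb {n : ℕ} {S : Matrix (Fin n) (Fin n) ℝ} (hS : S.IsHermitian) {a : ℝ}
    (h : (S - a • (1 : Matrix (Fin n) (Fin n) ℝ)).PosSemidef) (i : Fin n) :
    a ≤ hS.eigenvalues i := by
  have h2 := h.dotProduct_mulVec_nonneg ⇑(hS.eigenvectorBasis i)
  rw [Matrix.sub_mulVec, Matrix.smul_mulVec, Matrix.one_mulVec,
    hS.mulVec_eigenvectorBasis, dotProduct_sub, dotProduct_smul,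
    dotProduct_smul, dot_self_basis hS i] at h2
  simpa using h2

lemma eig_ub {n : ℕ} {S : Matrix (Fin n) (Fin n) ℝ} (hS : S.IsHermitian)
    (h : ((1 : Matrix (Fin n) (Fin n) ℝ) - S).PosSemidef) (i : Fin n) :
    hS.eigenvalues i ≤ 1 := by
  have h2 := h.dotProduct_mulVec_nonneg ⇑(hS.eigenvectorBasis i)
  rw [Matrix.sub_mulVec, Matrix.one_mulVec, hS.mulVec_eigenvectorBasis,
    dotProduct_sub, dotProduct_smul, dot_self_basis hS i] at h2
  simpa using h2

lemma eig_le_norm {n : ℕ} {A : Matrix (Fin n) (Fin n) ℝ} (hA : A.IsHermitian) (i : Fin n) :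
    hA.eigenvalues i ≤ ‖A‖ := by
  have hv : ‖hA.eigenvectorBasis i‖ = 1 := hA.eigenvectorBasis.orthonormal.1 i
  have h1 := A.l2_opNorm_mulVec (hA.eigenvectorBasis i)
  rw [hv, mul_one] at h1
  have h1' : ‖(EuclideanSpace.equiv (Fin n) ℝ).symm (A *ᵥ ⇑(hA.eigenvectorBasis i))‖ ≤ ‖A‖ := h1
  have h2 : (EuclideanSpace.equiv (Fin n) ℝ).symm (A *ᵥ ⇑(hA.eigenvectorBasis i))
      = hA.eigenvalues i • hA.eigenvectorBasis i := by
    rw [hA.mulVec_eigenvectorBasis]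
    rfl
  rw [h2, norm_smul, hv, mul_one] at h1'
  calc hA.eigenvalues i ≤ |hA.eigenvalues i| := le_abs_self _
    _ ≤ ‖A‖ := by simpa using h1'

/-- Smallest eigenvalue of a Hermitian real matrix. -/
noncomputable def sigmaMin {n : ℕ} {S : Matrix (Fin n) (Fin n) ℝ}
    (h : S.IsHermitian) : ℝ := ⨅ i, h.eigenvalues i

lemma smin_psd {n : ℕ} {R : Matrix (Fin n) (Fin n) ℝ} (hR : R.IsHermitian) :
    (R - sigmaMin hR • (1 : Matrix (Fin n) (Fin n) ℝ)).PosSemidef := by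
  have h := poly_psd hR (-(sigmaMin hR)) 1 0 (fun i => by
    have : sigmaMin hR ≤ hR.eigenvalues i :=
      ciInf_le (Set.Finite.bddBelow (Set.finite_range _)) i
    simp only [one_mul, zero_mul]
    linarith)
  have e : R - sigmaMin hR • (1 : Matrix (Fin n) (Fin n) ℝ)
      = (-(sigmaMin hR)) • (1 : Matrix (Fin n) (Fin n) ℝ) + (1:ℝ) • R + (0:ℝ) • (R * R) := by
    module
  rw [e]
  exact h

set_option maxHeartbeats 1000000 in
/-- The regularized covariance update stays in the band `aI ⪯ Σ' ⪯ I`: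
for `Σ' = Σ - (η/(1-γ)) Σ((R+G) - (τ/2)Σ⁻¹)Σ` with `aI ⪯ Σ ⪯ I`,
`0 < a < min{τ/(2‖R+G‖), σ_min(Σ)}`, `η ≤ 2(1-γ)a²/τ`, `τ ≤ 2σ_min(R)`,
the update is symmetric and satisfies `aI ⪯ Σ' ⪯ I`. -/
theorem stmt_13 (n : ℕ) (η τ γ a : ℝ) (hη : 0 < η) (hτ : 0 < τ)
    (hγ0 : 0 < γ) (hγ1 : γ < 1)
    (R G : Matrix (Fin n) (Fin n) ℝ) (hR : R.PosDef) (hG : G.PosSemidef)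
    (S : Matrix (Fin n) (Fin n) ℝ) (hS : S.PosDef)
    (hSa : (S - a • (1 : Matrix (Fin n) (Fin n) ℝ)).PosSemidef)
    (hSI : ((1 : Matrix (Fin n) (Fin n) ℝ) - S).PosSemidef)
    (ha0 : 0 < a) (ha1 : a < τ / (2 * ‖R + G‖)) (ha2 : a < sigmaMin hS.1)
    (hη2 : η ≤ 2 * (1 - γ) * a ^ 2 / τ) (hτ2 : τ ≤ 2 * sigmaMin hR.1)
    (S' : Matrix (Fin n) (Fin n) ℝ)
    (hS' : S' = S - (η / (1 - γ)) • (S * ((R + G) - (τ / 2) • S⁻¹) * S)) :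
    S'.IsSymm ∧ (S' - a • (1 : Matrix (Fin n) (Fin n) ℝ)).PosSemidef ∧
      ((1 : Matrix (Fin n) (Fin n) ℝ) - S').PosSemidef := by
  have h1γ : 0 < 1 - γ := by linarith
  set c : ℝ := η / (1 - γ) with hcdef
  have hc0 : 0 < c := div_pos hη h1γ
  set N : ℝ := ‖R + G‖ with hNdef
  have hRG : (R + G).IsHermitian := hR.1.add hG.1
  have hN0 : 0 < N := by
    rcases (norm_nonneg (R + G)).lt_or_eq with h | h
    · exact h
    · exfalso
      have hN' : N = 0 := by rw [hNdef, ← h]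
      rw [hN'] at ha1
      simp only [mul_zero, div_zero] at ha1
      linarith
  -- scalar facts
  have hba : c * (τ / 2) ≤ a ^ 2 := by
    have h1 : η * τ ≤ 2 * (1 - γ) * a ^ 2 := by
      calc η * τ ≤ (2 * (1 - γ) * a ^ 2 / τ) * τ := by
            exact mul_le_mul_of_nonneg_right hη2 hτ.le
        _ = 2 * (1 - γ) * a ^ 2 := by field_simp
    rw [hcdef, div_mul_eq_mul_div, div_le_iff₀ h1γ]
    nlinarith
  have hKa' : (c * N) * (τ / (2 * N)) = c * (τ / 2) := by
    field_simp
  have hK0 : 0 < c * N := mul_pos hc0 hN0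
  -- eigenvalue bounds for S
  have heiga : ∀ i, a ≤ hS.1.eigenvalues i := eig_lb hS.1 hSa
  have heig1 : ∀ i, hS.1.eigenvalues i ≤ 1 := eig_ub hS.1 hSI
  -- S * S⁻¹ = 1
  have hSinv : S * S⁻¹ = 1 :=
    Matrix.mul_nonsing_inv S (isUnit_iff_ne_zero.mpr hS.det_pos.ne')
  have expand1 : S * ((R + G) - (τ / 2) • S⁻¹) * S = S * (R + G) * S - (τ / 2) • S := by
    rw [Matrix.mul_sub, Matrix.sub_mul, Matrix.mul_smul, Matrix.smul_mul, hSinv,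
      Matrix.one_mul]
  -- lower bound
  have hpsd1 : ((-a) • (1 : Matrix (Fin n) (Fin n) ℝ) + (1 + c * (τ / 2)) • S
      + (-(c * N)) • (S * S)).PosSemidef := by
    refine poly_psd hS.1 _ _ _ (fun i => ?_)
    set l := hS.1.eigenvalues i with hl
    have hai := heiga i
    have h1i := heig1 i
    have hl0 : 0 < l := lt_of_lt_of_le ha0 hai
    have h5 : c * N * a < a ^ 2 := by nlinarith [hKa', hba, ha1, hK0]
    have hKa : c * N < a := by nlinarith [ha0]
    have h7 : 0 ≤ 1 - c * N * l := by nlinarith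
    have h8 : 0 < c * (τ / 2) - a * (c * N) := by nlinarith [hKa', ha1, hK0]
    nlinarith [mul_nonneg (sub_nonneg.2 hai) h7, mul_pos hl0 h8]
  have hnorm : (N • (1 : Matrix (Fin n) (Fin n) ℝ) - (R + G)).PosSemidef := by
    have h := poly_psd hRG N (-1) 0 (fun i => by
      have := eig_le_norm hRG i
      simp only [neg_one_mul, zero_mul]
      linarith)
    have e : N • (1 : Matrix (Fin n) (Fin n) ℝ) - (R + G)
        = N • (1 : Matrix (Fin n) (Fin n) ℝ) + (-1 : ℝ) • (R + G)
          + (0:ℝ) • ((R + G) * (R + G)) := by module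
    rw [e]; exact h
  have hpsd2 : (c • (S * (N • (1 : Matrix (Fin n) (Fin n) ℝ) - (R + G)) * S)).PosSemidef := by
    have h := hnorm.mul_mul_conjTranspose_same S
    rw [hS.1.eq] at h
    exact psd_smul h hc0.le
  have elow : S' - a • (1 : Matrix (Fin n) (Fin n) ℝ)
      = ((-a) • (1 : Matrix (Fin n) (Fin n) ℝ) + (1 + c * (τ / 2)) • S
          + (-(c * N)) • (S * S))
        + c • (S * (N • (1 : Matrix (Fin n) (Fin n) ℝ) - (R + G)) * S) := by
    rw [hS', expand1]
    have expand2 : S * (N • (1 : Matrix (Fin n) (Fin n) ℝ) - (R + G)) * S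
        = N • (S * S) - S * (R + G) * S := by
      rw [Matrix.mul_sub, Matrix.sub_mul, Matrix.mul_smul, Matrix.smul_mul, Matrix.mul_one]
    rw [expand2]
    module
  have hlow : (S' - a • (1 : Matrix (Fin n) (Fin n) ℝ)).PosSemidef := by
    rw [elow]; exact hpsd1.add hpsd2
  -- upper bound
  have hpsd3 : ((1:ℝ) • (1 : Matrix (Fin n) (Fin n) ℝ) + (-(1 + c * (τ / 2))) • S
      + (c * (τ / 2)) • (S * S)).PosSemidef := by
    refine poly_psd hS.1 _ _ _ (fun i => ?_)
    set l := hS.1.eigenvalues i with hl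
    have hai := heiga i
    have h1i := heig1 i
    have hb0 : 0 < c * (τ / 2) := by positivity
    nlinarith [mul_nonneg (sub_nonneg.2 h1i) (show 0 ≤ 1 - c * (τ / 2) * l by nlinarith)]
  have hRGτ : ((R + G) - (τ / 2) • (1 : Matrix (Fin n) (Fin n) ℝ)).PosSemidef := by
    have h1 := smin_psd hR.1
    have h2 : ((sigmaMin hR.1 - τ / 2) • (1 : Matrix (Fin n) (Fin n) ℝ)).PosSemidef :=
      psd_smul Matrix.PosSemidef.one (by linarith)
    have e : (R + G) - (τ / 2) • (1 : Matrix (Fin n) (Fin n) ℝ)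
        = (R - sigmaMin hR.1 • (1 : Matrix (Fin n) (Fin n) ℝ))
          + ((sigmaMin hR.1 - τ / 2) • (1 : Matrix (Fin n) (Fin n) ℝ) + G) := by module
    rw [e]
    exact h1.add (h2.add hG)
  have hpsd4 : (c • (S * ((R + G) - (τ / 2) • (1 : Matrix (Fin n) (Fin n) ℝ)) * S)).PosSemidef := by
    have h := hRGτ.mul_mul_conjTranspose_same S
    rw [hS.1.eq] at h
    exact psd_smul h hc0.le
  have eup : (1 : Matrix (Fin n) (Fin n) ℝ) - S'
      = ((1:ℝ) • (1 : Matrix (Fin n) (Fin n) ℝ) + (-(1 + c * (τ / 2))) • S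
          + (c * (τ / 2)) • (S * S))
        + c • (S * ((R + G) - (τ / 2) • (1 : Matrix (Fin n) (Fin n) ℝ)) * S) := by
    rw [hS', expand1]
    have expand3 : S * ((R + G) - (τ / 2) • (1 : Matrix (Fin n) (Fin n) ℝ)) * S
        = S * (R + G) * S - (τ / 2) • (S * S) := by
      rw [Matrix.mul_sub, Matrix.sub_mul, Matrix.mul_smul, Matrix.smul_mul, Matrix.mul_one]
    rw [expand3]
    module
  have hup : ((1 : Matrix (Fin n) (Fin n) ℝ) - S').PosSemidef := by
    rw [eup]; exact hpsd3.add hpsd4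
  -- symmetry
  have hsym : S'.IsSymm := by
    have h := hlow.1
    have h2 : S'ᴴ - a • (1 : Matrix (Fin n) (Fin n) ℝ) = S' - a • (1 : Matrix (Fin n) (Fin n) ℝ) := by
      have := h.eq
      rwa [Matrix.conjTranspose_sub, Matrix.conjTranspose_smul, star_trivial,
        Matrix.conjTranspose_one] at this
    have h3 : S'ᴴ = S' := by
      have := congrArg (· + a • (1 : Matrix (Fin n) (Fin n) ℝ)) h2
      simpa [sub_add_cancel] using this
    have hct : S'ᴴ = S'ᵀ := by
      ext i j
      simp [Matrix.conjTranspose_apply]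
    unfold Matrix.IsSymm
    rw [← hct]
    exact h3
  exact ⟨hsym, hlow, hup⟩
end
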